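/- arXiv:0907.0528 — 3 statements merged into one kernel-verified Lean document; each statement's English description precedes it below -/
import Mathlib

section
/- Two shift-invariant probability measures on a subshift X that both satisfy the Gibbs inequality for the same continuous potential ψ (possibly with different constants C and the same pressure P) are mutually absolutely continuous; consequently, there is at most one shift-invariant ergodic probability measure satisfying the Gibbs inequality for ψ. -/
open MeasureTheory Filter Topology
open scoped ENNReal

attribute [local instance] Classical.propDecidable

noncomputable section

/-- The shift map on one-sided sequences. -/
def shiftSeq {A : Type*} : (ℕ → A) → (ℕ → A) := fun a n => a (n + 1)

/-- The cylinder set of a finite word. -/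
def cyl {A : Type*} {n : ℕ} (w : Fin n → A) : Set (ℕ → A) := {a | ∀ i : Fin n, a (i : ℕ) = w i}

/-- Birkhoff sum `S_n ψ`. -/
def birk {A : Type*} (ψ : (ℕ → A) → ℝ) (n : ℕ) (a : ℕ → A) : ℝ :=
  ∑ k ∈ Finset.range n, ψ (shiftSeq^[k] a)

/-- `ψ` is an `(r+1)`-symbol potential: it depends only on coordinates `0,…,r`. -/
def IsLocConst {A : Type*} (r : ℕ) (ψ : (ℕ → A) → ℝ) : Prop :=
  ∀ a b : ℕ → A, (∀ i ≤ r, a i = b i) → ψ a = ψ b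

/-- `n`-th variation of a potential. -/
def varPot {A : Type*} (n : ℕ) (ψ : (ℕ → A) → ℝ) : ℝ :=
  sSup {x | ∃ a b : ℕ → A, (∀ i ≤ n, a i = b i) ∧ x = |ψ a - ψ b|}

/-- Gibbs inequality on the full shift, with pressure `P` and constant `C`. -/
def IsGibbsFull {A : Type*} [MeasurableSpace A] (μ : Measure (ℕ → A))
    (ψ : (ℕ → A) → ℝ) (P C : ℝ) : Prop :=
  ∀ (n : ℕ) (a : ℕ → A),
    Real.exp (birk ψ (n + 1) a - (n + 1) * P) / C
        ≤ (μ (cyl (fun i : Fin (n + 1) => a i))).toReal ∧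
    (μ (cyl (fun i : Fin (n + 1) => a i))).toReal
        ≤ C * Real.exp (birk ψ (n + 1) a - (n + 1) * P)

/-- Gibbs inequality on a subshift `X`, with pressure `P` and constant `C`. -/
def IsGibbsOn {A : Type*} [MeasurableSpace A] (X : Set (ℕ → A)) (μ : Measure (ℕ → A))
    (ψ : (ℕ → A) → ℝ) (P C : ℝ) : Prop :=
  ∀ (n : ℕ), ∀ a ∈ X,
    Real.exp (birk ψ (n + 1) a - (n + 1) * P) / C
        ≤ (μ (X ∩ cyl (fun i : Fin (n + 1) => a i))).toReal ∧
    (μ (X ∩ cyl (fun i : Fin (n + 1) => a i))).toReal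
        ≤ C * Real.exp (birk ψ (n + 1) a - (n + 1) * P)

/-!
On cylinders the Gibbs inequalities give `μ₁ [w] ≤ C₁ C₂ μ₂ [w]`, the common factor
`exp (S_{n+1} ψ - (n+1) P)` cancelling because the pressure is the same. An open set is the
increasing union of the finite-length cylinders it contains, and a finite measure on `ℕ → A`
is outer regular, so the bound passes to all Borel sets: `μ₁ ≤ C₁ C₂ • μ₂`, and symmetrically.
An invariant measure absolutely continuous with respect to an ergodic one equals it, since its
density is an invariant function.
-/

open Set

section Cylinders

variable {A : Type*}

def cylInterior (n : ℕ) (U : Set (ℕ → A)) : Set (ℕ → A) :=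
  {x | cyl (fun i : Fin n => x i) ⊆ U}

lemma cyl_eq_of_mem {n : ℕ} {w : Fin n → A} {x : ℕ → A} (hx : x ∈ cyl w) :
    cyl (fun i : Fin n => x i) = cyl w := by
  rw [show (fun i : Fin n => x i) = w from funext hx]

lemma cyl_succ_subset (n : ℕ) (x : ℕ → A) :
    cyl (fun i : Fin (n + 1) => x i) ⊆ cyl (fun i : Fin n => x i) :=
  fun _ hy i => hy i.castSucc

lemma cylInterior_mono (U : Set (ℕ → A)) : Monotone fun n => cylInterior n U :=
  monotone_nat_of_le_succ fun n _ hx => (cyl_succ_subset n _).trans hx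

lemma cylInterior_eq_biUnion (n : ℕ) (U : Set (ℕ → A)) :
    cylInterior n U = ⋃ w ∈ {w : Fin n → A | cyl w ⊆ U}, cyl w := by
  ext x
  simp only [mem_iUnion, exists_prop]
  exact ⟨fun hx => ⟨_, hx, fun _ => rfl⟩,
    fun ⟨_, hwU, hxw⟩ => (cyl_eq_of_mem hxw).trans_subset hwU⟩

lemma iUnion_cylInterior_succ [TopologicalSpace A] [DiscreteTopology A] {U : Set (ℕ → A)}
    (hU : IsOpen U) : ⋃ n, cylInterior (n + 1) U = U := by
  refine Subset.antisymm (iUnion_subset fun n x hx => hx fun _ => rfl) fun x hx => ?_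
  obtain ⟨I, u, hI, hIU⟩ := isOpen_pi_iff.1 hU x hx
  refine mem_iUnion.2 ⟨I.sup id, fun y hy => hIU fun i hi => ?_⟩
  rw [hy ⟨i, Nat.lt_succ_of_le (Finset.le_sup (f := id) hi)⟩]
  exact (hI i hi).2

lemma pairwise_disjoint_cyl {n : ℕ} :
    Pairwise (Function.onFun Disjoint (cyl : (Fin n → A) → Set (ℕ → A))) :=
  fun _ _ hwv => disjoint_left.2 fun _ hw hv => hwv (funext fun i => (hw i).symm.trans (hv i))

lemma measurableSet_cyl [MeasurableSpace A] [MeasurableSingletonClass A] {n : ℕ}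
    (w : Fin n → A) : MeasurableSet (cyl w) := by
  rw [show cyl w = ⋂ i : Fin n, (fun a : ℕ → A => a i) ⁻¹' {w i} by ext; simp [cyl]]
  exact MeasurableSet.iInter fun i => measurable_pi_apply _ (measurableSet_singleton _)

end Cylinders

section Comparison

variable {A : Type*} [Countable A] [MeasurableSpace A] {μ ν : Measure (ℕ → A)}

lemma measure_biUnion_cyl_le [MeasurableSingletonClass A] {n : ℕ}
    (h : ∀ w : Fin n → A, μ (cyl w) ≤ ν (cyl w)) (S : Set (Fin n → A)) :
    μ (⋃ w ∈ S, cyl w) ≤ ν (⋃ w ∈ S, cyl w) := by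
  have hd : S.PairwiseDisjoint cyl := fun _ _ _ _ h => pairwise_disjoint_cyl h
  rw [measure_biUnion S.to_countable hd fun w _ => measurableSet_cyl w,
    measure_biUnion S.to_countable hd fun w _ => measurableSet_cyl w]
  exact ENNReal.tsum_le_tsum fun w => h w

variable [TopologicalSpace A] [DiscreteTopology A] [BorelSpace A]

lemma measure_le_of_isOpen_of_cyl_le (h : ∀ n (w : Fin (n + 1) → A), μ (cyl w) ≤ ν (cyl w))
    {U : Set (ℕ → A)} (hU : IsOpen U) : μ U ≤ ν U := by
  have hmono : Monotone fun n => cylInterior (n + 1) U :=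
    (cylInterior_mono U).comp fun _ _ h => Nat.succ_le_succ h
  calc μ U = ⨆ n, μ (cylInterior (n + 1) U) := by
        rw [← hmono.measure_iUnion, iUnion_cylInterior_succ hU]
    _ ≤ ν U := iSup_le fun n => by
        rw [cylInterior_eq_biUnion]
        exact (measure_biUnion_cyl_le (h n) _).trans (measure_mono (iUnion₂_subset fun _ hw => hw))

lemma Measure.le_of_cyl_le [IsFiniteMeasure ν]
    (h : ∀ n (w : Fin (n + 1) → A), μ (cyl w) ≤ ν (cyl w)) : μ ≤ ν := by
  refine Measure.le_iff'.2 fun s => ?_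
  rw [Set.measure_eq_iInf_isOpen s ν]
  exact le_iInf₂ fun U hsU => le_iInf fun hU =>
    (measure_mono hsU).trans (measure_le_of_isOpen_of_cyl_le h hU)

end Comparison

section Gibbs

variable {A : Type*} [MeasurableSpace A] {X : Set (ℕ → A)} {ψ : (ℕ → A) → ℝ} {P C₁ C₂ : ℝ}
  {μ₁ μ₂ : Measure (ℕ → A)}

lemma IsGibbsOn.measure_inter_cyl_le [IsFiniteMeasure μ₁] [IsFiniteMeasure μ₂]
    (hG₁ : IsGibbsOn X μ₁ ψ P C₁) (hG₂ : IsGibbsOn X μ₂ ψ P C₂) (hC₂ : 0 < C₂) {n : ℕ}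
    (w : Fin (n + 1) → A) :
    μ₁ (X ∩ cyl w) ≤ ENNReal.ofReal (C₁ * C₂) * μ₂ (X ∩ cyl w) := by
  rcases (X ∩ cyl w).eq_empty_or_nonempty with h | ⟨a, haX, haw⟩
  · simp [h]
  rw [← cyl_eq_of_mem haw]
  obtain ⟨-, hupper⟩ := hG₁ n a haX
  obtain ⟨hlower, -⟩ := hG₂ n a haX
  set E := Real.exp (birk ψ (n + 1) a - (n + 1) * P)
  have hE : 0 < E := Real.exp_pos _
  have hC₁ : 0 ≤ C₁ := nonneg_of_mul_nonneg_left (ENNReal.toReal_nonneg.trans hupper) hE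
  rw [← ENNReal.ofReal_toReal (measure_ne_top μ₂ _), ← ENNReal.ofReal_mul (by positivity),
    ENNReal.le_ofReal_iff_toReal_le (measure_ne_top μ₁ _) (by positivity)]
  calc _ ≤ C₁ * E := hupper
    _ ≤ C₁ * (C₂ * (μ₂ (X ∩ cyl fun i : Fin (n + 1) => a i)).toReal) := by
        rw [div_le_iff₀ hC₂] at hlower
        gcongr
        linarith
    _ = _ := by ring

variable [Countable A] [TopologicalSpace A] [DiscreteTopology A] [BorelSpace A]
  [IsProbabilityMeasure μ₁] [IsProbabilityMeasure μ₂]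

lemma IsGibbsOn.le_smul (hX : MeasurableSet X) (hμ₁X : μ₁ X = 1) (hμ₂X : μ₂ X = 1)
    (hG₁ : IsGibbsOn X μ₁ ψ P C₁) (hG₂ : IsGibbsOn X μ₂ ψ P C₂) (hC₂ : 0 < C₂) :
    μ₁ ≤ ENNReal.ofReal (C₁ * C₂) • μ₂ := by
  have := μ₂.smul_finite (ENNReal.ofReal_ne_top (r := C₁ * C₂))
  have hconull {μ : Measure (ℕ → A)} [IsProbabilityMeasure μ] (hμX : μ X = 1) (s : Set (ℕ → A)) :
      μ (X ∩ s) = μ s := by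
    rw [inter_comm]
    exact measure_inter_conull ((prob_compl_eq_zero_iff hX).2 hμX)
  refine Measure.le_of_cyl_le fun n w => ?_
  rw [Measure.smul_apply, smul_eq_mul, ← hconull hμ₁X, ← hconull hμ₂X]
  exact hG₁.measure_inter_cyl_le hG₂ hC₂ w

lemma IsGibbsOn.absolutelyContinuous (hX : MeasurableSet X) (hμ₁X : μ₁ X = 1) (hμ₂X : μ₂ X = 1)
    (hG₁ : IsGibbsOn X μ₁ ψ P C₁) (hG₂ : IsGibbsOn X μ₂ ψ P C₂) (hC₂ : 0 < C₂) : μ₁ ≪ μ₂ :=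
  (hG₁.le_smul hX hμ₁X hμ₂X hG₂ hC₂).absolutelyContinuous.trans Measure.smul_absolutelyContinuous

end Gibbs

theorem gibbs_mutually_ac_and_unique_ergodic_general {A : Type*} [Fintype A] [TopologicalSpace A]
    [DiscreteTopology A] [MeasurableSpace A] [BorelSpace A]
    (X : Set (ℕ → A)) (hXcl : IsClosed X)
    (ψ : (ℕ → A) → ℝ) (P : ℝ)
    (μ₁ μ₂ : Measure (ℕ → A))
    (hμ₁p : IsProbabilityMeasure μ₁) (hμ₂p : IsProbabilityMeasure μ₂)
    (hμ₁X : μ₁ X = 1) (hμ₂X : μ₂ X = 1)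
    (hμ₁inv : MeasurePreserving shiftSeq μ₁ μ₁)
    (C₁ C₂ : ℝ) (hC₁ : 1 ≤ C₁) (hC₂ : 1 ≤ C₂)
    (hG₁ : IsGibbsOn X μ₁ ψ P C₁) (hG₂ : IsGibbsOn X μ₂ ψ P C₂) :
    (μ₁ ≪ μ₂ ∧ μ₂ ≪ μ₁) ∧
    (Ergodic shiftSeq μ₁ → Ergodic shiftSeq μ₂ → μ₁ = μ₂) := by
  have hX := hXcl.measurableSet
  have h₁₂ : μ₁ ≪ μ₂ := hG₁.absolutelyContinuous hX hμ₁X hμ₂X hG₂ (zero_lt_one.trans_le hC₂)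
  have h₂₁ : μ₂ ≪ μ₁ := hG₂.absolutelyContinuous hX hμ₂X hμ₁X hG₁ (zero_lt_one.trans_le hC₁)
  exact ⟨⟨h₁₂, h₂₁⟩, fun _ hμ₂erg => hμ₂erg.eq_of_absolutelyContinuous hμ₁inv h₁₂⟩

/-- two Gibbs measures for the same potential (same pressure, possibly different
constants) are mutually absolutely continuous; hence at most one such measure is ergodic. -/
theorem gibbs_mutually_ac_and_unique_ergodic {A : Type*} [Fintype A] [TopologicalSpace A]
    [DiscreteTopology A] [MeasurableSpace A] [BorelSpace A]
    (X : Set (ℕ → A)) (hXcl : IsClosed X) (hXinv : Set.MapsTo shiftSeq X X)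
    (ψ : (ℕ → A) → ℝ) (hψ : ContinuousOn ψ X) (P : ℝ)
    (μ₁ μ₂ : Measure (ℕ → A))
    (hμ₁p : IsProbabilityMeasure μ₁) (hμ₂p : IsProbabilityMeasure μ₂)
    (hμ₁X : μ₁ X = 1) (hμ₂X : μ₂ X = 1)
    (hμ₁inv : MeasurePreserving shiftSeq μ₁ μ₁) (hμ₂inv : MeasurePreserving shiftSeq μ₂ μ₂)
    (C₁ C₂ : ℝ) (hC₁ : 1 ≤ C₁) (hC₂ : 1 ≤ C₂)
    (hG₁ : IsGibbsOn X μ₁ ψ P C₁) (hG₂ : IsGibbsOn X μ₂ ψ P C₂) :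
    (μ₁ ≪ μ₂ ∧ μ₂ ≪ μ₁) ∧
    (Ergodic shiftSeq μ₁ → Ergodic shiftSeq μ₂ → μ₁ = μ₂) :=
  gibbs_mutually_ac_and_unique_ergodic_general X hXcl ψ P μ₁ μ₂ hμ₁p hμ₂p hμ₁X hμ₂X hμ₁inv C₁ C₂ hC₁
    hC₂ hG₁ hG₂
end
end

section
/- Let M : E × E' → ℝ≥0 be a row-allowable nonnegative matrix between finite index sets, and let F_M(x) = Mx/|Mx|_1 map the open probability simplex Δ_{E'} to Δ_E. Then for all x, y ∈ Δ_{E'}, δ_E(F_M x, F_M y) ≤ τ(M) δ_{E'}(x, y), where δ is Hilbert's projective metric δ_E(x,y) = max_{e,f} log(x(e)y(f)/(x(f)y(e))), τ(M) = (1-√Φ(M))/(1+√Φ(M)), and Φ(M) = min_{e,f,e',f'} M(e,e')M(f,f')/(M(e,f')M(f,e')) if M > 0 and Φ(M) = 0 otherwise. Moreover τ(M) < 1 if and only if M > 0. -/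
open MeasureTheory Filter Topology
open scoped ENNReal

attribute [local instance] Classical.propDecidable

noncomputable section

/-- Hilbert's projective metric on positive vectors. -/
def hilbertDist {E : Type*} [Fintype E] (x y : E → ℝ) : ℝ :=
  ⨆ e : E, ⨆ f : E, Real.log ((x e * y f) / (x f * y e))

/-- Birkhoff's cross-ratio bound `Φ(M)`: the minimum of the cross ratios when `M > 0`,
and `0` otherwise. -/
def PhiM {E E' : Type*} [Fintype E] [Fintype E'] (M : Matrix E E' ℝ) : ℝ :=
  if ∀ e e', 0 < M e e' then
    ⨅ e : E, ⨅ f : E, ⨅ e' : E', ⨅ f' : E', M e e' * M f f' / (M e f' * M f e')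
  else 0

/-- Birkhoff's contraction coefficient `τ(M)`. -/
def tauM {E E' : Type*} [Fintype E] [Fintype E'] (M : Matrix E E' ℝ) : ℝ :=
  (1 - Real.sqrt (PhiM M)) / (1 + Real.sqrt (PhiM M))

/-- The normalized action of `M` on the simplex. -/
def FM {E E' : Type*} [Fintype E] [Fintype E'] (M : Matrix E E' ℝ) (x : E' → ℝ) : E → ℝ :=
  fun e => M.mulVec x e / ∑ f, M.mulVec x f

/-- Membership in the open probability simplex. -/
def inSimplex {E : Type*} [Fintype E] (x : E → ℝ) : Prop :=
  (∀ e, 0 < x e) ∧ ∑ e, x e = 1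

/-!
Hilbert's metric ignores scaling, so it suffices to bound `(Mx)_e (My)_f / ((Mx)_f (My)_e)`.
Writing `x_i = m w_i y_i` with `1 ≤ w ≤ exp δ(x, y)`, the inequality to prove is linear in `w`,
so it is enough to check it at the vertices `w = 1 + (exp δ - 1) 𝟙_S` of the box. There the two
rows collapse to a `2 × 2` matrix whose cross ratio is still at least `Φ(M)`, and for that matrix
`t ↦ τ t - log ((A₁ + eᵗ A₂) / (B₁ + eᵗ B₂))` is monotone: with `s = eᵗ`, `P = A₂ B₁`, `Q = A₁ B₂`,
its derivative is `τ - s (P - Q) / ((A₁ + s A₂) (B₁ + s B₂))`, AM-GM bounds the denominator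
below by `s (√P + √Q)²`, and `(√P - √Q) / (√P + √Q) ≤ τ` because `Φ P ≤ Q`.
-/

open Real Matrix

def birkhoffCoeff (φ : ℝ) : ℝ := (1 - √φ) / (1 + √φ)

lemma birkhoffCoeff_nonneg {φ : ℝ} (hφ : φ ≤ 1) : 0 ≤ birkhoffCoeff φ :=
  div_nonneg (sub_nonneg.2 (sqrt_le_one.2 hφ)) (by positivity)

lemma birkhoffCoeff_lt_one_iff {φ : ℝ} : birkhoffCoeff φ < 1 ↔ 0 < φ := by
  rw [birkhoffCoeff, div_lt_one (by positivity), ← sqrt_pos]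
  constructor <;> intro h <;> linarith

lemma sub_le_birkhoffCoeff_mul_sq {P Q φ : ℝ} (hP : 0 ≤ P) (hQ : 0 ≤ Q) (hφ : 0 ≤ φ)
    (hPQ : φ * P ≤ Q) : P - Q ≤ birkhoffCoeff φ * (√P + √Q) ^ 2 := by
  have hsqrt : √φ * √P ≤ √Q := by
    rw [← sqrt_mul hφ]
    exact sqrt_le_sqrt hPQ
  rw [birkhoffCoeff, div_mul_eq_mul_div, le_div_iff₀ (by positivity)]
  nlinarith [mul_nonneg (sub_nonneg.2 hsqrt) (add_nonneg (sqrt_nonneg P) (sqrt_nonneg Q)),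
    sq_sqrt hP, sq_sqrt hQ, sqrt_nonneg P, sqrt_nonneg Q, sqrt_nonneg φ]

lemma mul_div_sub_mul_div_le_birkhoffCoeff {A₁ A₂ B₁ B₂ φ s : ℝ} (hA₁ : 0 ≤ A₁) (hA₂ : 0 ≤ A₂)
    (hB₁ : 0 ≤ B₁) (hB₂ : 0 ≤ B₂) (hs : 0 ≤ s) (hA : 0 < A₁ + s * A₂) (hB : 0 < B₁ + s * B₂)
    (hφ0 : 0 ≤ φ) (hφ1 : φ ≤ 1) (hcross : φ * (A₂ * B₁) ≤ A₁ * B₂) :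
    s * A₂ / (A₁ + s * A₂) - s * B₂ / (B₁ + s * B₂) ≤ birkhoffCoeff φ := by
  set P := A₂ * B₁
  set Q := A₁ * B₂
  have hP : 0 ≤ P := mul_nonneg hA₂ hB₁
  have hQ : 0 ≤ Q := mul_nonneg hA₁ hB₂
  have hPQ : √P * √Q = √(A₁ * B₁) * √(A₂ * B₂) := by
    rw [← sqrt_mul hP, ← sqrt_mul (mul_nonneg hA₁ hB₁)]
    congr 1
    ring
  have amgm : 2 * s * (√(A₁ * B₁) * √(A₂ * B₂)) ≤ A₁ * B₁ + s ^ 2 * (A₂ * B₂) := by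
    nlinarith [sq_nonneg (√(A₁ * B₁) - s * √(A₂ * B₂)),
      sq_sqrt (mul_nonneg hA₁ hB₁), sq_sqrt (mul_nonneg hA₂ hB₂)]
  have hden : s * (√P + √Q) ^ 2 ≤ (A₁ + s * A₂) * (B₁ + s * B₂) := by
    have : (√P + √Q) ^ 2 = P + Q + 2 * (√P * √Q) := by
      rw [add_sq, sq_sqrt hP, sq_sqrt hQ]; ring
    rw [this, hPQ]
    nlinarith
  rw [div_sub_div _ _ hA.ne' hB.ne', div_le_iff₀ (mul_pos hA hB)]
  calc s * A₂ * (B₁ + s * B₂) - (A₁ + s * A₂) * (s * B₂) = s * (P - Q) := by ring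
    _ ≤ s * (birkhoffCoeff φ * (√P + √Q) ^ 2) :=
      mul_le_mul_of_nonneg_left (sub_le_birkhoffCoeff_mul_sq hP hQ hφ0 hcross) hs
    _ = birkhoffCoeff φ * (s * (√P + √Q) ^ 2) := by ring
    _ ≤ birkhoffCoeff φ * ((A₁ + s * A₂) * (B₁ + s * B₂)) :=
      mul_le_mul_of_nonneg_left hden (birkhoffCoeff_nonneg hφ1)

lemma add_mul_pos_of_add_pos {p q s : ℝ} (hp : 0 ≤ p) (hq : 0 ≤ q) (hpq : 0 < p + q)
    (hs : 0 < s) : 0 < p + s * q := by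
  rcases hq.eq_or_lt with rfl | hq
  · simpa using hpq
  · positivity

lemma hasDerivAt_log_add_exp_mul {p q : ℝ} (t : ℝ) (h : p + exp t * q ≠ 0) :
    HasDerivAt (fun t => log (p + exp t * q)) (exp t * q / (p + exp t * q)) t :=
  (((hasDerivAt_exp t).mul_const q).const_add p).log h

lemma two_block_contraction {A₁ A₂ B₁ B₂ φ d : ℝ} (hA₁ : 0 ≤ A₁) (hA₂ : 0 ≤ A₂)
    (hB₁ : 0 ≤ B₁) (hB₂ : 0 ≤ B₂) (hA : 0 < A₁ + A₂) (hB : 0 < B₁ + B₂)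
    (hφ0 : 0 ≤ φ) (hφ1 : φ ≤ 1) (hcross : φ * (A₂ * B₁) ≤ A₁ * B₂) (hd : 0 ≤ d) :
    (A₁ + exp d * A₂) * (B₁ + B₂) ≤
      exp (birkhoffCoeff φ * d) * ((B₁ + exp d * B₂) * (A₁ + A₂)) := by
  have hApos t : 0 < A₁ + exp t * A₂ := add_mul_pos_of_add_pos hA₁ hA₂ hA (exp_pos t)
  have hBpos t : 0 < B₁ + exp t * B₂ := add_mul_pos_of_add_pos hB₁ hB₂ hB (exp_pos t)
  let g t := birkhoffCoeff φ * t + log (B₁ + exp t * B₂) - log (A₁ + exp t * A₂)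
  have hg t : HasDerivAt g (birkhoffCoeff φ * 1 + exp t * B₂ / (B₁ + exp t * B₂)
      - exp t * A₂ / (A₁ + exp t * A₂)) t :=
    (((hasDerivAt_id t).const_mul _).add
      (hasDerivAt_log_add_exp_mul t (hBpos t).ne')).sub
      (hasDerivAt_log_add_exp_mul t (hApos t).ne')
  have hmono : Monotone g := by
    refine monotone_of_deriv_nonneg (fun t => (hg t).differentiableAt) fun t => ?_
    rw [(hg t).deriv]
    linarith [mul_div_sub_mul_div_le_birkhoffCoeff hA₁ hA₂ hB₁ hB₂ (exp_pos t).le (hApos t)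
      (hBpos t) hφ0 hφ1 hcross]
  have hlog : log (A₁ + exp d * A₂) + log (B₁ + B₂) ≤
      birkhoffCoeff φ * d + log (B₁ + exp d * B₂) + log (A₁ + A₂) := by
    have := hmono hd
    simp only [g, exp_zero, one_mul, mul_zero, zero_add] at this
    linarith
  have := exp_le_exp.2 hlog
  rwa [exp_add, exp_add, exp_add, exp_log (hApos d), exp_log hB, exp_log (hBpos d),
    exp_log hA, mul_assoc] at this

section WeightedSums

variable {ι : Type*}

lemma sum_ite_mul_le_sum_mul [Fintype ι] (c w : ι → ℝ) {D : ℝ} (hw1 : ∀ i, 1 ≤ w i)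
    (hwD : ∀ i, w i ≤ D) :
    ∑ i, (if c i < 0 then D else 1) * c i ≤ ∑ i, w i * c i := by
  refine Finset.sum_le_sum fun i _ => ?_
  split_ifs with hc
  · exact mul_le_mul_of_nonpos_right (hwD i) hc.le
  · exact mul_le_mul_of_nonneg_right (hw1 i) (not_lt.1 hc)

lemma sum_mul_ite [Fintype ι] (p : ι → Prop) [DecidablePred p] (a : ι → ℝ) (D : ℝ) :
    ∑ i, a i * (if p i then D else 1) = ∑ i with ¬p i, a i + D * ∑ i with p i, a i := by
  simp only [mul_ite, mul_one, Finset.sum_ite, Finset.mul_sum, mul_comm, add_comm]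

lemma mul_sum_mul_sum_le {a b : ι → ℝ} {φ : ℝ} (hcross : ∀ i j, φ * (a j * b i) ≤ a i * b j)
    (s t : Finset ι) :
    φ * ((∑ j ∈ s, a j) * ∑ i ∈ t, b i) ≤ (∑ i ∈ t, a i) * ∑ j ∈ s, b j := by
  rw [Finset.sum_mul_sum, Finset.sum_mul_sum, Finset.sum_comm, Finset.mul_sum]
  exact Finset.sum_le_sum fun i _ => by
    rw [Finset.mul_sum]
    exact Finset.sum_le_sum fun j _ => hcross i j

theorem sum_mul_mul_sum_le_exp_mul [Fintype ι] {a b w : ι → ℝ} {φ d : ℝ} (ha : ∀ i, 0 ≤ a i)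
    (hb : ∀ i, 0 ≤ b i) (hA : 0 < ∑ i, a i) (hB : 0 < ∑ i, b i) (hw1 : ∀ i, 1 ≤ w i)
    (hwd : ∀ i, w i ≤ exp d) (hφ0 : 0 ≤ φ) (hφ1 : φ ≤ 1)
    (hcross : ∀ i j, φ * (a j * b i) ≤ a i * b j) :
    (∑ i, a i * w i) * ∑ i, b i ≤ exp (birkhoffCoeff φ * d) * ((∑ i, b i * w i) * ∑ i, a i) := by
  classical
  obtain ⟨i₀, -, -⟩ := Finset.exists_ne_zero_of_sum_ne_zero hA.ne'
  have hd : 0 ≤ d := one_le_exp_iff.1 ((hw1 i₀).trans (hwd i₀))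
  set C := exp (birkhoffCoeff φ * d)
  -- the claim is `0 ≤ ∑ i, w i * c i`, and over the box this linear form is least at a vertex
  let c i := C * (b i * ∑ j, a j) - a i * ∑ j, b j
  have hform (v : ι → ℝ) : ∑ i, v i * c i
      = C * ((∑ i, b i * v i) * ∑ i, a i) - (∑ i, a i * v i) * ∑ i, b i := by
    rw [Finset.sum_mul, Finset.sum_mul, Finset.mul_sum, ← Finset.sum_sub_distrib]
    exact Finset.sum_congr rfl fun i _ => by ring
  have hsplit (v : ι → ℝ) : ∑ i with ¬c i < 0, v i + ∑ i with c i < 0, v i = ∑ i, v i := by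
    rw [add_comm]; exact Finset.sum_filter_add_sum_filter_not _ _ _
  have hvertex := two_block_contraction
    (A₂ := ∑ i with c i < 0, a i) (B₂ := ∑ i with c i < 0, b i)
    (Finset.sum_nonneg fun i _ => ha i) (Finset.sum_nonneg fun i _ => ha i)
    (Finset.sum_nonneg fun i _ => hb i) (Finset.sum_nonneg fun i _ => hb i)
    (by rwa [hsplit]) (by rwa [hsplit]) hφ0 hφ1 (mul_sum_mul_sum_le hcross _ _) hd
  have hmin := sum_ite_mul_le_sum_mul c w hw1 hwd
  rw [hform, hform, sum_mul_ite, sum_mul_ite] at hmin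
  rw [hsplit, hsplit] at hvertex
  linear_combination hmin + hvertex

end WeightedSums

section HilbertMetric

variable {E : Type*} [Fintype E]

lemma log_ratio_le_hilbertDist (x y : E → ℝ) (e f : E) :
    log (x e * y f / (x f * y e)) ≤ hilbertDist x y :=
  Finite.le_ciSup_of_le e (Finite.le_ciSup (fun f => log (x e * y f / (x f * y e))) f)

lemma mul_le_exp_hilbertDist_mul {x y : E → ℝ} (hx : ∀ e, 0 < x e) (hy : ∀ e, 0 < y e)
    (e f : E) : x e * y f ≤ exp (hilbertDist x y) * (x f * y e) := by
  have hden : 0 < x f * y e := mul_pos (hx f) (hy e)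
  rw [← div_le_iff₀ hden, ← log_le_iff_le_exp (div_pos (mul_pos (hx e) (hy f)) hden)]
  exact log_ratio_le_hilbertDist x y e f

lemma hilbertDist_le_of_forall_mul_le [Nonempty E] {x y : E → ℝ} {c : ℝ} (hx : ∀ e, 0 < x e)
    (hy : ∀ e, 0 < y e) (h : ∀ e f, x e * y f ≤ exp c * (x f * y e)) : hilbertDist x y ≤ c := by
  refine ciSup_le fun e => ciSup_le fun f => ?_
  have hden : 0 < x f * y e := mul_pos (hx f) (hy e)
  rw [log_le_iff_le_exp (div_pos (mul_pos (hx e) (hy f)) hden), div_le_iff₀ hden]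
  exact h e f

lemma hilbertDist_div_const (x y : E → ℝ) {c c' : ℝ} (hc : c ≠ 0) (hc' : c' ≠ 0) :
    hilbertDist (fun e => x e / c) (fun e => y e / c') = hilbertDist x y := by
  simp only [hilbertDist, div_mul_div_comm, div_div_div_cancel_right₀ (mul_ne_zero hc hc')]

end HilbertMetric

lemma lt_ciInf_of_finite {ι : Type*} [Finite ι] [Nonempty ι] {f : ι → ℝ} {a : ℝ}
    (h : ∀ i, a < f i) : a < ⨅ i, f i := by
  obtain ⟨i, hi⟩ := exists_eq_ciInf_of_finite (f := f)
  exact hi ▸ h i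

section Matrix

variable {E E' : Type*} [Fintype E] [Fintype E'] {M : Matrix E E' ℝ}

lemma tauM_eq : tauM M = birkhoffCoeff (PhiM M) := rfl

lemma PhiM_nonneg (hnn : ∀ e e', 0 ≤ M e e') : 0 ≤ PhiM M := by
  unfold PhiM
  split_ifs
  · exact iInf_nonneg fun e => iInf_nonneg fun f => iInf_nonneg fun e' => iInf_nonneg fun f' =>
      div_nonneg (mul_nonneg (hnn _ _) (hnn _ _)) (mul_nonneg (hnn _ _) (hnn _ _))
  · exact le_rfl

lemma PhiM_le_one [Nonempty E] [Nonempty E'] : PhiM M ≤ 1 := by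
  unfold PhiM
  split_ifs
  · obtain ⟨e⟩ := ‹Nonempty E›
    obtain ⟨e'⟩ := ‹Nonempty E'›
    exact Finite.ciInf_le_of_le e <| Finite.ciInf_le_of_le e <| Finite.ciInf_le_of_le e' <|
      Finite.ciInf_le_of_le e' <| div_self_le_one _
  · exact zero_le_one

lemma PhiM_mul_le (hnn : ∀ e e', 0 ≤ M e e') (e f : E) (e' f' : E') :
    PhiM M * (M e f' * M f e') ≤ M e e' * M f f' := by
  unfold PhiM
  split_ifs with hpos
  · rw [← le_div_iff₀ (mul_pos (hpos _ _) (hpos _ _))]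
    exact Finite.ciInf_le_of_le e <| Finite.ciInf_le_of_le f <| Finite.ciInf_le_of_le e' <|
      Finite.ciInf_le _ f'
  · rw [zero_mul]
    exact mul_nonneg (hnn _ _) (hnn _ _)

lemma PhiM_pos_iff [Nonempty E] [Nonempty E'] : 0 < PhiM M ↔ ∀ e e', 0 < M e e' := by
  unfold PhiM
  split_ifs with hpos
  · exact iff_of_true (lt_ciInf_of_finite fun e => lt_ciInf_of_finite fun f =>
      lt_ciInf_of_finite fun e' => lt_ciInf_of_finite fun f' => by
        have := hpos e e'; have := hpos f f'; have := hpos e f'; have := hpos f e'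
        positivity) hpos
  · exact iff_of_false (lt_irrefl 0) hpos

lemma tauM_lt_one_iff [Nonempty E] [Nonempty E'] : tauM M < 1 ↔ ∀ e e', 0 < M e e' :=
  birkhoffCoeff_lt_one_iff.trans PhiM_pos_iff

lemma mulVec_mul_le_exp_tauM_mul [Nonempty E'] (hnn : ∀ e e', 0 ≤ M e e') {x y : E' → ℝ}
    (hx : ∀ i, 0 < x i) (hy : ∀ i, 0 < y i) (hMy : ∀ e, 0 < (M *ᵥ y) e) (e f : E) :
    (M *ᵥ x) e * (M *ᵥ y) f ≤ exp (tauM M * hilbertDist x y) * ((M *ᵥ x) f * (M *ᵥ y) e) := by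
  obtain ⟨j, hj⟩ := Finite.exists_min fun i => x i / y i
  have hm : 0 < x j / y j := div_pos (hx j) (hy j)
  let w i := x i / y i / (x j / y j)
  have hw1 i : 1 ≤ w i := (one_le_div hm).2 (hj i)
  have hwd i : w i ≤ exp (hilbertDist x y) := by
    rw [div_le_iff₀ hm, ← mul_div_assoc, div_le_div_iff₀ (hy i) (hy j), mul_assoc]
    exact mul_le_exp_hilbertDist_mul hx hy i j
  have hMx g : (M *ᵥ x) g = x j / y j * ∑ i, M g i * y i * w i := by
    simp only [mulVec, dotProduct, Finset.mul_sum]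
    exact Finset.sum_congr rfl fun i _ => by
      simp only [w]; field_simp [(hx j).ne', (hy i).ne', (hy j).ne']
  have hMy' g : (M *ᵥ y) g = ∑ i, M g i * y i := rfl
  have : Nonempty E := ⟨e⟩
  have key := sum_mul_mul_sum_le_exp_mul (a := fun i => M e i * y i) (b := fun i => M f i * y i)
    (fun i => mul_nonneg (hnn _ _) (hy i).le) (fun i => mul_nonneg (hnn _ _) (hy i).le)
    (hMy e) (hMy f) hw1 hwd (PhiM_nonneg hnn) PhiM_le_one fun i j => by
      nlinarith [mul_le_mul_of_nonneg_right (PhiM_mul_le hnn e f i j)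
        (mul_pos (hy i) (hy j)).le]
  rw [hMx, hMx, hMy', hMy', tauM_eq]
  nlinarith [mul_le_mul_of_nonneg_left key hm.le]

theorem hilbertDist_mulVec_le [Nonempty E] [Nonempty E'] (hnn : ∀ e e', 0 ≤ M e e')
    {x y : E' → ℝ} (hx : ∀ i, 0 < x i) (hy : ∀ i, 0 < y i) (hMx : ∀ e, 0 < (M *ᵥ x) e)
    (hMy : ∀ e, 0 < (M *ᵥ y) e) : hilbertDist (M *ᵥ x) (M *ᵥ y) ≤ tauM M * hilbertDist x y :=
  hilbertDist_le_of_forall_mul_le hMx hMy (mulVec_mul_le_exp_tauM_mul hnn hx hy hMy)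

end Matrix

/-- Birkhoff's contraction theorem for row-allowable nonnegative matrices. -/
theorem birkhoff_contraction {E E' : Type*} [Fintype E] [Fintype E'] [Nonempty E] [Nonempty E']
    (M : Matrix E E' ℝ) (hnn : ∀ e e', 0 ≤ M e e')
    (hrow : ∀ x : E' → ℝ, (∀ e', 0 < x e') → ∀ e, 0 < M.mulVec x e) :
    (∀ x y : E' → ℝ, inSimplex x → inSimplex y →
        hilbertDist (FM M x) (FM M y) ≤ tauM M * hilbertDist x y) ∧
    (tauM M < 1 ↔ ∀ e e', 0 < M e e') := by
  refine ⟨fun x y hx hy => ?_, tauM_lt_one_iff⟩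
  have hMx := hrow x hx.1
  have hMy := hrow y hy.1
  have hsum_ne {z : E' → ℝ} (hz : ∀ e, 0 < (M *ᵥ z) e) : ∑ e, (M *ᵥ z) e ≠ 0 :=
    (Finset.sum_pos (fun e _ => hz e) Finset.univ_nonempty).ne'
  unfold FM
  rw [hilbertDist_div_const _ _ (hsum_ne hMx) (hsum_ne hMy)]
  exact hilbertDist_mulVec_le hnn hx.1 hy.1 hMx hMy
end
end

section
/- Let M : E × E → ℝ≥0 be primitive. Then the spectral radius of M equals sup_{x ∈ Δ_E} min_{e ∈ E} (Mx)(e)/x(e), this supremum is attained at a strictly positive vector, and every eigenvalue λ of M (over ℂ) satisfies |λ| ≤ sup_{x ∈ Δ_E} min_e (Mx)(e)/x(e). -/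
open MeasureTheory Filter Topology
open scoped ENNReal

attribute [local instance] Classical.propDecidable

noncomputable section

/-!
Let `P` be a matrix with positive entries commuting with `M` (for primitive `M`, `P = M ^ ℓ`).
If `c x ≤ M x` for some `x ≥ 0`, `x ≠ 0`, then `c (P x) ≤ M (P x)` with `P x > 0`, and the
inequality is strict in every coordinate unless `M x = c x`. Hence the Collatz–Wielandt function
`x ↦ min_e (Mx)(e)/x(e)` does not decrease under `x ↦ P x`, so its supremum `r` over the open
simplex is its maximum over the image of the compact closed simplex under `P`, attained at a
positive `x₀`. Strictness forces `M x₀ = r x₀`, and for an eigenvector `v` with eigenvalue `z`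
the triangle inequality gives `|z| |v| ≤ M |v|`, whence `|z| ≤ r`.
-/

open Matrix

section CollatzWielandt

variable {E : Type*} [Fintype E] {M P : Matrix E E ℝ}

variable (M) in
def collatzWielandt (x : E → ℝ) : ℝ :=
  ⨅ e, (M *ᵥ x) e / x e

variable (M) in
def collatzWielandtValues : Set ℝ :=
  {t | ∃ x : E → ℝ, inSimplex x ∧ t = collatzWielandt M x}

lemma mulVec_nonneg_of_nonneg (hP : ∀ e f, 0 ≤ P e f) {u : E → ℝ} (hu : 0 ≤ u) :
    0 ≤ P *ᵥ u :=
  fun e => Finset.sum_nonneg fun f _ => mul_nonneg (hP e f) (hu f)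

lemma mulVec_pos_of_pos (hP : ∀ e f, 0 < P e f) {u : E → ℝ}
    (hu : 0 ≤ u) (hu' : u ≠ 0) (e : E) : 0 < (P *ᵥ u) e := by
  obtain ⟨f, hf⟩ := Function.ne_iff.1 hu'
  exact Finset.sum_pos' (fun f _ => mul_nonneg (hP e f).le (hu f))
    ⟨f, Finset.mem_univ f, mul_pos (hP e f) ((hu f).lt_of_ne' hf)⟩

lemma mulVec_mulVec_sub_smul_of_commute (hMP : Commute M P) (c : ℝ) (x : E → ℝ) :
    M *ᵥ (P *ᵥ x) - c • (P *ᵥ x) = P *ᵥ (M *ᵥ x - c • x) := by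
  rw [mulVec_sub, mulVec_smul, mulVec_mulVec, mulVec_mulVec, hMP.eq]

lemma smul_le_mulVec_mulVec_of_commute (hMP : Commute M P)
    (hP : ∀ e f, 0 ≤ P e f) {c : ℝ} {x : E → ℝ} (h : ∀ e, c * x e ≤ (M *ᵥ x) e)
    (e : E) :
    c * (P *ᵥ x) e ≤ (M *ᵥ (P *ᵥ x)) e := by
  have hw : 0 ≤ M *ᵥ x - c • x := fun f => sub_nonneg.2 (h f)
  have := mulVec_nonneg_of_nonneg hP hw e
  rw [← mulVec_mulVec_sub_smul_of_commute hMP] at this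
  simpa using this

lemma smul_lt_mulVec_mulVec_of_commute (hMP : Commute M P)
    (hP : ∀ e f, 0 < P e f) {c : ℝ} {x : E → ℝ} (h : ∀ e, c * x e ≤ (M *ᵥ x) e)
    (hne : M *ᵥ x ≠ c • x) (e : E) : c * (P *ᵥ x) e < (M *ᵥ (P *ᵥ x)) e := by
  have hw : 0 ≤ M *ᵥ x - c • x := fun f => sub_nonneg.2 (h f)
  have := mulVec_pos_of_pos hP hw (sub_ne_zero.2 hne) e
  rw [← mulVec_mulVec_sub_smul_of_commute hMP] at this
  simpa using this

variable (M) in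
lemma collatzWielandt_smul {c : ℝ} (hc : c ≠ 0) (x : E → ℝ) :
    collatzWielandt M (c • x) = collatzWielandt M x := by
  refine iInf_congr fun e => ?_
  rw [mulVec_smul, Pi.smul_apply, Pi.smul_apply, smul_eq_mul, smul_eq_mul]
  exact mul_div_mul_left _ _ hc

variable (M) in
lemma collatzWielandt_mul_le {x : E → ℝ} (hx : ∀ e, 0 < x e) (e : E) :
    collatzWielandt M x * x e ≤ (M *ᵥ x) e :=
  (le_div_iff₀ (hx e)).1 (ciInf_le (Finite.bddBelow_range _) e)

variable [Nonempty E]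

lemma inSimplex_inv_sum_smul {v : E → ℝ} (hv : ∀ e, 0 < v e) :
    inSimplex ((∑ e, v e)⁻¹ • v) := by
  have hs : 0 < ∑ e, v e := Finset.sum_pos (fun e _ => hv e) Finset.univ_nonempty
  refine ⟨fun e => mul_pos (inv_pos.2 hs) (hv e), ?_⟩
  simp only [Pi.smul_apply, smul_eq_mul, ← Finset.mul_sum, inv_mul_cancel₀ hs.ne']

lemma le_collatzWielandt {x : E → ℝ} {c : ℝ} (hx : ∀ e, 0 < x e)
    (h : ∀ e, c * x e ≤ (M *ᵥ x) e) : c ≤ collatzWielandt M x :=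
  le_ciInf fun e => (le_div_iff₀ (hx e)).2 (h e)

lemma lt_collatzWielandt {x : E → ℝ} {c : ℝ} (hx : ∀ e, 0 < x e)
    (h : ∀ e, c * x e < (M *ᵥ x) e) : c < collatzWielandt M x := by
  obtain ⟨e, he⟩ := exists_eq_ciInf_of_finite (f := fun e => (M *ᵥ x) e / x e)
  rw [collatzWielandt, ← he]
  exact (lt_div_iff₀ (hx e)).2 (h e)

variable (M) in
lemma continuousOn_collatzWielandt :
    ContinuousOn (collatzWielandt M) {x | ∀ e, 0 < x e} := by
  have hinf : collatzWielandt M =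
      fun x => Finset.univ.inf' Finset.univ_nonempty fun e => (M *ᵥ x) e / x e := by
    ext x
    exact (Finset.inf'_univ_eq_ciInf _).symm
  rw [hinf]
  refine ContinuousOn.finset_inf'_apply Finset.univ_nonempty fun e _ => ?_
  exact ContinuousOn.div (by fun_prop) (by fun_prop) fun x hx => (hx e).ne'

lemma exists_isGreatest_collatzWielandtValues (hMP : Commute M P) (hP : ∀ e f, 0 < P e f) :
    ∃ x₀, inSimplex x₀ ∧ IsGreatest (collatzWielandtValues M) (collatzWielandt M x₀) := by
  have hpos : ∀ y ∈ stdSimplex ℝ E, ∀ e, 0 < (P *ᵥ y) e := fun y hy =>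
    mulVec_pos_of_pos hP hy.1 fun h => by simpa [h] using hy.2
  have hcont : ContinuousOn (fun y => collatzWielandt M (P *ᵥ y)) (stdSimplex ℝ E) :=
    (continuousOn_collatzWielandt M).comp (by fun_prop) hpos
  obtain ⟨y₀, hy₀, hmax⟩ := (isCompact_stdSimplex ℝ E).exists_isMaxOn
    ⟨_, single_mem_stdSimplex ℝ (Classical.arbitrary E)⟩ hcont
  have hs : 0 < ∑ e, (P *ᵥ y₀) e :=
    Finset.sum_pos (fun e _ => hpos y₀ hy₀ e) Finset.univ_nonempty
  have hx₀ := inSimplex_inv_sum_smul (hpos y₀ hy₀)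
  refine ⟨_, hx₀, ⟨_, hx₀, rfl⟩, ?_⟩
  rintro _ ⟨x, hx, rfl⟩
  have hxK : x ∈ stdSimplex ℝ E := ⟨fun e => (hx.1 e).le, hx.2⟩
  calc collatzWielandt M x ≤ collatzWielandt M (P *ᵥ x) :=
        le_collatzWielandt (hpos x hxK) <| smul_le_mulVec_mulVec_of_commute hMP
          (fun e f => (hP e f).le) fun e => collatzWielandt_mul_le M hx.1 e
    _ ≤ collatzWielandt M (P *ᵥ y₀) := hmax hxK
    _ = _ := (collatzWielandt_smul M (inv_pos.2 hs).ne' _).symm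

lemma collatzWielandt_le_sSup (hMP : Commute M P) (hP : ∀ e f, 0 < P e f)
    {x : E → ℝ} (hx : ∀ e, 0 < x e) :
    collatzWielandt M x ≤ sSup (collatzWielandtValues M) := by
  obtain ⟨_, -, hgreat⟩ := exists_isGreatest_collatzWielandtValues hMP hP
  have hs : 0 < ∑ e, x e := Finset.sum_pos (fun e _ => hx e) Finset.univ_nonempty
  rw [← collatzWielandt_smul M (inv_pos.2 hs).ne']
  exact le_csSup hgreat.bddAbove ⟨_, inSimplex_inv_sum_smul hx, rfl⟩

lemma le_sSup_of_smul_le_mulVec (hMP : Commute M P) (hP : ∀ e f, 0 < P e f)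
    {c : ℝ} {u : E → ℝ} (hu : 0 ≤ u) (hu' : u ≠ 0)
    (h : ∀ e, c * u e ≤ (M *ᵥ u) e) : c ≤ sSup (collatzWielandtValues M) := by
  have hPu := mulVec_pos_of_pos hP hu hu'
  exact (le_collatzWielandt hPu (smul_le_mulVec_mulVec_of_commute hMP (fun e f => (hP e f).le)
    h)).trans (collatzWielandt_le_sSup hMP hP hPu)

lemma mulVec_eq_smul_of_collatzWielandt_eq_sSup (hMP : Commute M P) (hP : ∀ e f, 0 < P e f)
    {x : E → ℝ} (hx : ∀ e, 0 < x e)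
    (hxr : collatzWielandt M x = sSup (collatzWielandtValues M)) :
    M *ᵥ x = sSup (collatzWielandtValues M) • x := by
  by_contra hne
  have hle := collatzWielandt_mul_le M hx
  rw [hxr] at hle
  have hPx := mulVec_pos_of_pos hP (fun e => (hx e).le) fun h => by simp [h] at hx
  exact (lt_collatzWielandt hPx (smul_lt_mulVec_mulVec_of_commute hMP hP hle hne)).not_ge
    (collatzWielandt_le_sSup hMP hP hPx)

lemma norm_le_sSup_of_hasEigenvalue (hMP : Commute M P) (hP : ∀ e f, 0 < P e f)
    (hM : ∀ e f, 0 ≤ M e f) {z : ℂ}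
    (hz : Module.End.HasEigenvalue (toLin' (M.map (fun t => (t : ℂ)))) z) :
    ‖z‖ ≤ sSup (collatzWielandtValues M) := by
  obtain ⟨v, hv⟩ := hz.exists_hasEigenvector
  have hMv : M.map (fun t => (t : ℂ)) *ᵥ v = z • v := by
    simpa only [toLin'_apply] using hv.apply_eq_smul
  refine le_sSup_of_smul_le_mulVec hMP hP (u := fun e => ‖v e‖) (fun e => norm_nonneg _)
    (fun h => hv.2 (funext fun e => norm_eq_zero.1 (congrFun h e))) fun e => ?_
  calc ‖z‖ * ‖v e‖ = ‖∑ f, (M e f : ℂ) * v f‖ := by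
        rw [← norm_mul, ← smul_eq_mul, ← Pi.smul_apply, ← hMv]
        rfl
    _ ≤ ∑ f, ‖(M e f : ℂ) * v f‖ := norm_sum_le _ _
    _ = ∑ f, M e f * ‖v f‖ := by
        simp only [norm_mul, Complex.norm_of_nonneg (hM e _)]

end CollatzWielandt

theorem collatz_wielandt_general {E : Type*} [Fintype E] [Nonempty E] [DecidableEq E]
    (M : Matrix E E ℝ) (hnn : ∀ e f, 0 ≤ M e f)
    (ℓ : ℕ) (hprim : ∀ e f, 0 < (M ^ ℓ) e f) :
    (∃ x₀ : E → ℝ, (∀ e, 0 < x₀ e) ∧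
        M.mulVec x₀ = (sSup {t : ℝ | ∃ x : E → ℝ, inSimplex x ∧
          t = ⨅ e : E, M.mulVec x e / x e}) • x₀ ∧
        (⨅ e : E, M.mulVec x₀ e / x₀ e) =
          sSup {t : ℝ | ∃ x : E → ℝ, inSimplex x ∧ t = ⨅ e : E, M.mulVec x e / x e}) ∧
    (∀ z : ℂ, Module.End.HasEigenvalue (Matrix.toLin' (M.map (fun t => (t : ℂ)))) z →
        ‖z‖ ≤ sSup {t : ℝ | ∃ x : E → ℝ, inSimplex x ∧
          t = ⨅ e : E, M.mulVec x e / x e}) := by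
  have hMP : Commute M (M ^ ℓ) := Commute.self_pow M ℓ
  obtain ⟨x₀, hx₀, hgreat⟩ := exists_isGreatest_collatzWielandtValues hMP hprim
  have hr : collatzWielandt M x₀ = sSup (collatzWielandtValues M) := hgreat.csSup_eq.symm
  exact ⟨⟨x₀, hx₀.1, mulVec_eq_smul_of_collatzWielandt_eq_sSup hMP hprim hx₀.1 hr, hr⟩,
    fun z hz => norm_le_sSup_of_hasEigenvalue hMP hprim hnn hz⟩

/-- Collatz–Wielandt characterization of the Perron root of a primitive
matrix: the sup over the simplex of `min_e (Mx)(e)/x(e)` is attained at a positive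
eigenvector and dominates the modulus of every (complex) eigenvalue. -/
theorem collatz_wielandt {E : Type*} [Fintype E] [Nonempty E] [DecidableEq E]
    (M : Matrix E E ℝ) (hnn : ∀ e f, 0 ≤ M e f)
    (ℓ : ℕ) (hℓ : 1 ≤ ℓ) (hprim : ∀ e f, 0 < (M ^ ℓ) e f) :
    (∃ x₀ : E → ℝ, (∀ e, 0 < x₀ e) ∧
        M.mulVec x₀ = (sSup {t : ℝ | ∃ x : E → ℝ, inSimplex x ∧
          t = ⨅ e : E, M.mulVec x e / x e}) • x₀ ∧
        (⨅ e : E, M.mulVec x₀ e / x₀ e) =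
          sSup {t : ℝ | ∃ x : E → ℝ, inSimplex x ∧ t = ⨅ e : E, M.mulVec x e / x e}) ∧
    (∀ z : ℂ, Module.End.HasEigenvalue (Matrix.toLin' (M.map (fun t => (t : ℂ)))) z →
        ‖z‖ ≤ sSup {t : ℝ | ∃ x : E → ℝ, inSimplex x ∧
          t = ⨅ e : E, M.mulVec x e / x e}) :=
  collatz_wielandt_general M hnn ℓ hprim
end
end
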